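/- arXiv:2605.14763 — 2 statements merged into one kernel-verified Lean document; each statement's English description precedes it below -/
import Mathlib

section
/- Let M be a module over ℤ equipped with a symmetric bilinear form B, and let h, a, b, c ∈ M satisfy B(h,h) = 3, B(h,a) = B(h,b) = B(h,c) = 0, B(a,a) = B(b,b) = B(c,c) = 4, B(b,c) = 1, B(a,b) = 2 and B(a,c) = 1. Then there exists a matrix P ∈ M₃(ℤ) with det P a unit of ℤ such that Pᵀ · [[3,6,0],[6,18,1],[0,1,4]] · P equals the Gram matrix of the triple (h, a, b − c); that is, the lattice spanned by (h, a, b − c) is isometric over ℤ to the lattice K_{0,4} with Gram matrix [[3,6,0],[6,18,1],[0,1,4]]. -/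
/-!
In the basis `e₁, e₂, e₃` of `K_{0,4}` the vectors `-e₁, -e₃, 2e₁ - e₂` form another basis (the
change of basis has determinant `-1`), with Gram matrix `⟨3⟩ ⊕ [[4, 1], [1, 6]]`. The hypotheses
give the same Gram matrix for `(h, a, b - c)`: `B(a, b - c) = 2 - 1` and
`B(b - c, b - c) = 4 - 2 + 4`.
-/

theorem LinearMap.gram_fin_three {R M : Type*} [CommSemiring R] [AddCommMonoid M]
    [Module R M] (B : M →ₗ[R] M →ₗ[R] R) (x y z : M) :
    Matrix.of (fun r s : Fin 3 => B (![x, y, z] r) (![x, y, z] s)) =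
      !![B x x, B x y, B x z; B y x, B y y, B y z; B z x, B z y, B z z] := by
  ext i j
  fin_cases i <;> fin_cases j <;> rfl

theorem K04_isometric_three_sum :
    ∃ P : Matrix (Fin 3) (Fin 3) ℤ, IsUnit P.det ∧
      P.transpose * !![3, 6, 0; 6, 18, 1; 0, 1, 4] * P = !![3, 0, 0; 0, 4, 1; 0, 1, 6] :=
  ⟨!![-1, 0, 2; 0, 0, -1; 0, -1, 0], by decide, by decide⟩

/-- The lattice spanned by `(h, a, b - c)` is isometric over `ℤ` to the
lattice `K_{0,4}` with Gram matrix `[[3,6,0],[6,18,1],[0,1,4]]`: there is an integral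
base-change matrix `P` with unit determinant carrying the latter Gram matrix to the former. -/
theorem triple_isometric_K04
    (M : Type*) [AddCommGroup M] [Module ℤ M]
    (B : M →ₗ[ℤ] M →ₗ[ℤ] ℤ) (hsymm : ∀ x y : M, B x y = B y x)
    (h a b c : M)
    (hhh : B h h = 3) (hha : B h a = 0) (hhb : B h b = 0) (hhc : B h c = 0)
    (haa : B a a = 4) (hbb : B b b = 4) (hcc : B c c = 4)
    (hbc : B b c = 1) (hab : B a b = 2) (hac : B a c = 1) :
    ∃ P : Matrix (Fin 3) (Fin 3) ℤ, IsUnit P.det ∧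
      P.transpose * !![3, 6, 0; 6, 18, 1; 0, 1, 4] * P =
        (Matrix.of fun r s : Fin 3 => B (![h, a, b - c] r) (![h, a, b - c] s)) := by
  obtain ⟨P, hP, hPK⟩ := K04_isometric_three_sum
  refine ⟨P, hP, hPK.trans ?_⟩
  rw [LinearMap.gram_fin_three]
  simp only [map_sub, LinearMap.sub_apply, hsymm a h, hsymm b h, hsymm c h, hsymm b a,
    hsymm c a, hsymm c b, hhh, hha, hhb, hhc, haa, hbb, hcc, hbc, hab, hac]
  norm_num
end

section
/- For every integer b there exists a matrix P ∈ M₃(ℤ) with det P a unit of ℤ such that Pᵀ · [[3,6,0],[6,18,1],[0,1,b]] · P = [[3,0,0],[0,b,1],[0,1,6]]; that is, the lattice K_{0,b} is isometric over ℤ to the lattice A_{2,1,(b−2)/2} with Gram matrix [[3,0,0],[0,b,1],[0,1,6]]. -/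
/-- For every integer `b`, the lattice `K_{0,b}` with Gram matrix
`[[3,6,0],[6,18,1],[0,1,b]]` is isometric over `ℤ` to the lattice `A_{2,1,(b-2)/2}`
with Gram matrix `[[3,0,0],[0,b,1],[0,1,6]]`. -/
theorem K0b_isometric_A21 (b : ℤ) :
    ∃ P : Matrix (Fin 3) (Fin 3) ℤ, IsUnit P.det ∧
      P.transpose * !![3, 6, 0; 6, 18, 1; 0, 1, b] * P =
        !![3, 0, 0; 0, b, 1; 0, 1, 6] := by
  refine ⟨!![1, 0, -2; 0, 0, 1; 0, 1, 0], ?_, ?_⟩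
  · have : (!![1, 0, -2; 0, 0, 1; 0, 1, 0] : Matrix (Fin 3) (Fin 3) ℤ).det = -1 := by
      simp [Matrix.det_fin_three]
    rw [this]; exact isUnit_one.neg
  · have ht : (!![1, 0, -2; 0, 0, 1; 0, 1, 0] : Matrix (Fin 3) (Fin 3) ℤ).transpose =
        !![1, 0, 0; 0, 0, 1; -2, 1, 0] := by
      ext i j; fin_cases i <;> fin_cases j <;> rfl
    rw [ht, Matrix.mul_fin_three, Matrix.mul_fin_three]
    norm_num
end
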